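/- Let T be a finite lattice and k a commutative ring. In the monoid algebra End_{kL}(T) of join-endomorphisms of T, define e = − Σ_{B ∈ 𝒵_T} μ(B, ∞) · α_B, where 𝒵_T is the set of chains of T containing both ⊥ and ⊤, μ is the Möbius function of the poset 𝒜_T ∪ {∞} of chains containing ⊥ with adjoined top ∞, and α_B(t) = min{ b ∈ B | b ≥ t }. Then for every join-endomorphism ψ of T whose image is totally ordered, e · ψ = ψ in End_{kL}(T). -/

import Mathlib

attribute [local instance] Classical.propDecidable
attribute [local instance] Fintype.toLocallyFiniteOrder
local instance {X : Type*} [Fintype X] : Fintype (WithTop X) :=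
  inferInstanceAs (Fintype (Option X))

open IncidenceAlgebra

/-- `alphaB B t = min { b ∈ B | b ≥ t }`, as an endomorphism of `T`. -/
noncomputable def alphaB {T : Type*} [Lattice T] [Fintype T] [BoundedOrder T]
    (B : Finset T) : Function.End T :=
  fun t => (B.filter fun b => t ≤ b).inf id

/-- The element `e = − Σ_{B ∈ 𝒵_T} μ(B, ∞) · α_B` of the monoid algebra on the
endomorphisms of `T`, where `𝒵_T` is the set of chains of `T` containing `⊥` and `⊤`,
and `μ` is the Möbius function of the poset of chains of `T` containing `⊥`
(ordered by inclusion) with an adjoined top element `∞`. -/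
noncomputable def eTot (T : Type*) [Lattice T] [Fintype T] [BoundedOrder T]
    (k : Type*) [CommRing k] : MonoidAlgebra k (Function.End T) :=
  - ∑ B : {B : Finset T // IsChain (· ≤ ·) (B : Set T) ∧ ⊥ ∈ B ∧ ⊤ ∈ B},
      ((mu ℤ
          ((⟨B.1, B.2.1, B.2.2.1⟩ : {A : Finset T // IsChain (· ≤ ·) (A : Set T) ∧ ⊥ ∈ A}) :
            WithTop {A : Finset T // IsChain (· ≤ ·) (A : Set T) ∧ ⊥ ∈ A}) ⊤ : ℤ) : k) •
        MonoidAlgebra.of k (Function.End T) (alphaB B.1)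

open Finset

section helpers
variable {T : Type*} [Lattice T] [Fintype T] [BoundedOrder T]

-- the involution lemma
lemma invol_sum {k : Type*} [CommRing k] (E F : Finset T) (x₀ : T) (hx₀ : x₀ ∈ F)
    (hpres : ∀ S ⊆ F, IsChain (· ≤ ·) ((E ∪ S : Finset T) : Set T) →
      IsChain (· ≤ ·) ((E ∪ insert x₀ S : Finset T) : Set T)) :
    ∑ S ∈ F.powerset,
      (if IsChain (· ≤ ·) ((E ∪ S : Finset T) : Set T) then ((-1 : k)) ^ S.card else 0) = 0 := by
  classical
  refine Finset.sum_involution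
    (fun S _ => if x₀ ∈ S then S.erase x₀ else insert x₀ S) ?_ ?_ ?_ ?_
  · -- f a + f (g a) = 0
    intro S hS
    rw [Finset.mem_powerset] at hS
    by_cases hmem : x₀ ∈ S
    · simp only [if_pos hmem]
      have hiff : IsChain (· ≤ ·) ((E ∪ S : Finset T) : Set T) ↔
          IsChain (· ≤ ·) ((E ∪ S.erase x₀ : Finset T) : Set T) := by
        constructor
        · intro h
          exact h.mono (by intro x hx; simp only [Finset.coe_union] at *
                           rcases hx with h1 | h1
                           · exact Or.inl h1
                           · exact Or.inr (Finset.mem_coe.2 (Finset.erase_subset _ _ h1)))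
        · intro h
          have := hpres (S.erase x₀) ((Finset.erase_subset _ _).trans hS) h
          rwa [Finset.insert_erase hmem] at this
      rcases Classical.em (IsChain (· ≤ ·) ((E ∪ S : Finset T) : Set T)) with hc | hc
      · rw [if_pos hc, if_pos (hiff.1 hc)]
        have hcard : S.card = (S.erase x₀).card + 1 := by
          rw [Finset.card_erase_of_mem hmem]
          have : 1 ≤ S.card := Finset.card_pos.2 ⟨x₀, hmem⟩
          omega
        rw [hcard, pow_succ]
        ring
      · rw [if_neg hc, if_neg (fun h => hc (hiff.2 h))]; ring
    · simp only [if_neg hmem]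
      have hiff : IsChain (· ≤ ·) ((E ∪ S : Finset T) : Set T) ↔
          IsChain (· ≤ ·) ((E ∪ insert x₀ S : Finset T) : Set T) := by
        constructor
        · exact fun h => hpres S hS h
        · intro h
          exact h.mono (by intro x hx; simp only [Finset.coe_union] at *
                           rcases hx with h1 | h1
                           · exact Or.inl h1
                           · exact Or.inr (Finset.mem_coe.2 (Finset.mem_insert_of_mem h1)))
      rcases Classical.em (IsChain (· ≤ ·) ((E ∪ S : Finset T) : Set T)) with hc | hc
      · rw [if_pos hc, if_pos (hiff.1 hc), Finset.card_insert_of_notMem hmem, pow_succ]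
        ring
      · rw [if_neg hc, if_neg (fun h => hc (hiff.2 h))]; ring
  · -- g a ≠ a
    intro S hS _
    by_cases hmem : x₀ ∈ S
    · simp only [if_pos hmem]
      intro h; exact (h ▸ Finset.notMem_erase x₀ S) hmem
    · simp only [if_neg hmem]
      intro h; exact hmem (h ▸ Finset.mem_insert_self x₀ S)
  · -- g a ∈ s
    intro S hS
    rw [Finset.mem_powerset] at *
    by_cases hmem : x₀ ∈ S
    · simpa [hmem] using (Finset.erase_subset _ _).trans hS
    · simp only [if_neg hmem]
      exact Finset.insert_subset hx₀ hS
  · -- involution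
    intro S hS
    by_cases hmem : x₀ ∈ S
    · simp [hmem, Finset.notMem_erase, Finset.insert_erase]
    · simp [hmem, Finset.erase_insert]

end helpers

section helpers2
variable {T : Type*} [Lattice T] [Fintype T] [BoundedOrder T]

lemma chain_inf_mem' {s : Finset T}
    (hc : IsChain (· ≤ ·) (s : Set T)) (hs : s.Nonempty) : s.inf id ∈ s := by
  classical
  induction s using Finset.induction with
  | empty => simp at hs
  | @insert a s ha ih =>
    rw [Finset.inf_insert]
    rcases s.eq_empty_or_nonempty with rfl | hs'
    · simp
    · have hc' : IsChain (· ≤ ·) (s : Set T) := hc.mono (by simp)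
      have hmem : s.inf id ∈ s := ih hc' hs'
      have hcomp : a ≤ s.inf id ∨ s.inf id ≤ a := by
        rcases eq_or_ne a (s.inf id) with h | h
        · exact Or.inl h.le
        · rcases hc (by simp) (by simp [hmem]) h with h' | h'
          · exact Or.inl h'
          · exact Or.inr h'
      rcases hcomp with h | h
      · simp [inf_eq_left.2 h]
      · rw [show (id a ⊓ s.inf id) = s.inf id from inf_eq_right.2 h]
        simp [hmem]

lemma alpha_eq_iff {B : Finset T} (hB : IsChain (· ≤ ·) (B : Set T)) (htop : ⊤ ∈ B) (v w : T) :
    (B.filter fun b => v ≤ b).inf id = w ↔ (w ∈ B ∧ v ≤ w ∧ ∀ b ∈ B, v ≤ b → w ≤ b) := by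
  classical
  set s := B.filter fun b => v ≤ b with hs
  have hcs : IsChain (· ≤ ·) (s : Set T) := hB.mono (by simp only [hs, Finset.coe_filter]; intro x hx; exact hx.1)
  have hns : s.Nonempty := ⟨⊤, by simp [hs, htop]⟩
  have hmem : s.inf id ∈ s := chain_inf_mem' hcs hns
  constructor
  · rintro rfl
    rw [hs, Finset.mem_filter] at hmem
    refine ⟨hmem.1, hmem.2, fun b hb hvb => ?_⟩
    exact Finset.inf_le (by simp [hs, hb, hvb])
  · rintro ⟨hwB, hvw, hmin⟩
    refine le_antisymm (Finset.inf_le (by simp [hs, hwB, hvw])) ?_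
    refine Finset.le_inf fun b hb => ?_
    rw [hs, Finset.mem_filter] at hb
    exact hmin b hb.1 hb.2

end helpers2

section main
variable {T : Type*} [Lattice T] [Fintype T] [BoundedOrder T]

local notation "P" => {A : Finset T // IsChain (· ≤ ·) (A : Set T) ∧ ⊥ ∈ A}

lemma sumA' (A : P) :
    ∑ B : P, (if A ≤ B then mu ℤ (B : WithTop P) ⊤ else 0) = -1 := by
  classical
  have h := sum_Icc_mu_left (𝕜 := ℤ) (a := (A : WithTop P)) (b := (⊤ : WithTop P))
  rw [if_neg (by simp)] at h
  have hsplit : Icc (A : WithTop P) ⊤ = insert ⊤ ((univ.filter fun B : P => A ≤ B).image (↑·)) := by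
    ext x
    cases x using WithTop.recTopCoe with
    | top => simp
    | coe B => simp [WithTop.coe_le_coe]
  rw [hsplit, Finset.sum_insert (by simp)] at h
  rw [Finset.sum_image (by intro a _ b _ hab; exact WithTop.coe_injective hab)] at h
  rw [Finset.sum_filter] at h
  rw [mu_self] at h
  linarith

lemma sumA_k {k : Type*} [CommRing k] (A : P) :
    ∑ B : P, (if A ≤ B then ((mu ℤ (B : WithTop P) ⊤ : ℤ) : k) else 0) = -1 := by
  have h := congrArg (fun n : ℤ => (n : k)) (sumA' A)
  simp only [Int.cast_sum, apply_ite (fun n : ℤ => (n : k)), Int.cast_zero, Int.cast_neg,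
    Int.cast_one] at h
  exact h

lemma cond_iff (ψ g : Function.End T) (hf1 : ∀ t, ψ t ≤ g t) {B : Finset T}
    (hB : IsChain (· ≤ ·) (B : Set T)) (hbot : ⊥ ∈ B) (htop : ⊤ ∈ B) :
    alphaB B * ψ = g ↔
      ((Finset.univ.image g ∪ {⊥, ⊤}) ⊆ B ∧
        ∀ b ∈ B, ¬∃ t, ψ t ≤ b ∧ ¬ g t ≤ b) := by
  classical
  constructor
  · intro h
    have hchar : ∀ t, g t ∈ B ∧ ψ t ≤ g t ∧ ∀ b ∈ B, ψ t ≤ b → g t ≤ b := fun t =>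
      (alpha_eq_iff hB htop (ψ t) (g t)).1 (congrFun h t)
    constructor
    · intro x hx
      rcases Finset.mem_union.1 hx with hx | hx
      · obtain ⟨t, -, rfl⟩ := Finset.mem_image.1 hx
        exact (hchar t).1
      · rcases Finset.mem_insert.1 hx with rfl | hx
        · exact hbot
        · rw [Finset.mem_singleton.1 hx]; exact htop
    · rintro b hb ⟨t, h1, h2⟩
      exact h2 ((hchar t).2.2 b hb h1)
  · rintro ⟨hE, hF⟩
    funext t
    show (B.filter fun b => ψ t ≤ b).inf id = g t
    refine (alpha_eq_iff hB htop _ _).2 ⟨?_, hf1 t, ?_⟩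
    · exact hE (Finset.mem_union_left _ (Finset.mem_image_of_mem g (Finset.mem_univ t)))
    · intro b hb hψb
      by_contra hgb
      exact hF b hb ⟨t, hψb, hgb⟩

end main

section main2
variable {T : Type*} [Lattice T] [Fintype T] [BoundedOrder T] {k : Type*} [CommRing k]

local notation "P" => {A : Finset T // IsChain (· ≤ ·) (A : Set T) ∧ ⊥ ∈ A}
local notation "ZT" => {B : Finset T // IsChain (· ≤ ·) (B : Set T) ∧ ⊥ ∈ B ∧ ⊤ ∈ B}

lemma key_calc (ψ : Function.End T) (hchain : IsChain (· ≤ ·) (Set.range ψ))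
    (g : Function.End T) :
    ∑ B : ZT,
      (if alphaB B.1 * ψ = g then
        ((mu ℤ ((⟨B.1, B.2.1, B.2.2.1⟩ : P) : WithTop P) ⊤ : ℤ) : k) else 0)
      = if ψ = g then (-1 : k) else 0 := by
  classical
  by_cases hf1 : ∀ t, ψ t ≤ g t
  case neg =>
    push_neg at hf1
    obtain ⟨t₀, ht₀⟩ := hf1
    have hne : ψ ≠ g := fun h => ht₀ (h ▸ le_refl (ψ t₀))
    rw [if_neg hne]
    refine Finset.sum_eq_zero fun B _ => ?_
    rw [if_neg]
    intro h
    exact ht₀ ((alpha_eq_iff B.2.1 B.2.2.2 (ψ t₀) (g t₀)).1 (congrFun h t₀)).2.1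
  set E : Finset T := Finset.univ.image g ∪ {⊥, ⊤} with hE
  set F : Finset T := Finset.univ.filter (fun b => ∃ t, ψ t ≤ b ∧ ¬ g t ≤ b) with hF
  have htopE : ⊤ ∈ E := by simp [hE]
  have hbotE : ⊥ ∈ E := by simp [hE]
  -- Step 1 : reindex the sum over P
  have step1 : (∑ B : ZT,
      (if alphaB B.1 * ψ = g then
        ((mu ℤ ((⟨B.1, B.2.1, B.2.2.1⟩ : P) : WithTop P) ⊤ : ℤ) : k) else 0))
      = ∑ A : P, (if E ⊆ A.1 ∧ (∀ b ∈ A.1, b ∉ F) then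
          ((mu ℤ (A : WithTop P) ⊤ : ℤ) : k) else 0) := by
    calc ∑ B : ZT,
        (if alphaB B.1 * ψ = g then
          ((mu ℤ ((⟨B.1, B.2.1, B.2.2.1⟩ : P) : WithTop P) ⊤ : ℤ) : k) else 0)
        = ∑ A ∈ Finset.univ.filter (fun A : P => ⊤ ∈ A.1),
            (if E ⊆ A.1 ∧ (∀ b ∈ A.1, b ∉ F) then
              ((mu ℤ (A : WithTop P) ⊤ : ℤ) : k) else 0) := by
          refine Finset.sum_bij' (fun B _ => (⟨B.1, B.2.1, B.2.2.1⟩ : P))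
            (fun A hA => (⟨A.1, A.2.1, A.2.2, (Finset.mem_filter.1 hA).2⟩ : ZT)) ?_ ?_ ?_ ?_ ?_
          · intro B _
            exact Finset.mem_filter.2 ⟨Finset.mem_univ _, B.2.2.2⟩
          · intro A _
            exact Finset.mem_univ _
          · intro B _
            rfl
          · intro A _
            rfl
          · intro B _
            have hcond := cond_iff ψ g hf1 B.2.1 B.2.2.1 B.2.2.2
            by_cases h : alphaB B.1 * ψ = g
            · rw [if_pos h, if_pos]
              rcases hcond.1 h with ⟨h1, h2⟩
              exact ⟨by rw [hE]; exact h1, fun b hb hbF => (h2 b hb) (by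
                have := (Finset.mem_filter.1 (hF ▸ hbF)).2
                exact this)⟩
            · rw [if_neg h, if_neg]
              intro ⟨h1, h2⟩
              exact h (hcond.2 ⟨by rw [← hE]; exact h1, fun b hb hex =>
                h2 b hb (Finset.mem_filter.2 ⟨Finset.mem_univ _, hex⟩)⟩)
      _ = _ := by
          refine Finset.sum_subset (Finset.filter_subset _ _) ?_
          intro A _ hA
          rw [Finset.mem_filter, not_and] at hA
          rw [if_neg]
          intro ⟨h1, _⟩
          exact hA (Finset.mem_univ _) (h1 htopE)
  rw [step1]
  -- Step 2 : powerset expansion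
  have step2 : ∀ A : P,
      (if E ⊆ A.1 ∧ (∀ b ∈ A.1, b ∉ F) then ((mu ℤ (A : WithTop P) ⊤ : ℤ) : k) else 0)
      = ∑ S ∈ F.powerset,
          (if E ∪ S ⊆ A.1 then (-1 : k) ^ S.card * ((mu ℤ (A : WithTop P) ⊤ : ℤ) : k) else 0) := by
    intro A
    by_cases hEA : E ⊆ A.1
    case neg =>
      rw [if_neg (fun h => hEA h.1)]
      refine (Finset.sum_eq_zero fun S _ => ?_).symm
      rw [if_neg]
      intro h
      exact hEA ((Finset.union_subset_iff.1 h).1)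
    have hrw : ∀ S ∈ F.powerset,
        (if E ∪ S ⊆ A.1 then (-1 : k) ^ S.card * ((mu ℤ (A : WithTop P) ⊤ : ℤ) : k) else 0)
        = (if S ⊆ A.1 then (-1 : k) ^ S.card * ((mu ℤ (A : WithTop P) ⊤ : ℤ) : k) else 0) := by
      intro S _
      congr 1
      simp [Finset.union_subset_iff, hEA]
    rw [Finset.sum_congr rfl hrw]
    have hsub : (F ∩ A.1).powerset ⊆ F.powerset :=
      Finset.powerset_mono.2 Finset.inter_subset_left
    rw [← Finset.sum_subset hsub (by
      intro S hS hS'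
      rw [Finset.mem_powerset] at *
      rw [if_neg]
      intro hSA
      exact hS' (Finset.subset_inter hS hSA))]
    have hval : ∀ S ∈ (F ∩ A.1).powerset,
        (if S ⊆ A.1 then (-1 : k) ^ S.card * ((mu ℤ (A : WithTop P) ⊤ : ℤ) : k) else 0)
        = (-1 : k) ^ S.card * ((mu ℤ (A : WithTop P) ⊤ : ℤ) : k) := by
      intro S hS
      rw [Finset.mem_powerset] at hS
      rw [if_pos (hS.trans Finset.inter_subset_right)]
    rw [Finset.sum_congr rfl hval, ← Finset.sum_mul]
    have hps : (∑ S ∈ (F ∩ A.1).powerset, (-1 : k) ^ S.card)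
        = if F ∩ A.1 = ∅ then 1 else 0 := by
      have h := congrArg (fun n : ℤ => (n : k))
        (Finset.sum_powerset_neg_one_pow_card (x := F ∩ A.1))
      simp only [Int.cast_sum, Int.cast_pow, Int.cast_neg, Int.cast_one,
        apply_ite (fun n : ℤ => (n : k)), Int.cast_zero] at h
      exact h
    rw [hps]
    have hiff : (F ∩ A.1 = ∅) ↔ (∀ b ∈ A.1, b ∉ F) := by
      rw [Finset.eq_empty_iff_forall_notMem]
      constructor
      · intro h b hb hbF
        exact h b (Finset.mem_inter.2 ⟨hbF, hb⟩)
      · intro h b hb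
        rcases Finset.mem_inter.1 hb with ⟨h1, h2⟩
        exact h b h2 h1
    by_cases hA : ∀ b ∈ A.1, b ∉ F
    · rw [if_pos ⟨hEA, hA⟩, if_pos (hiff.2 hA), one_mul]
    · rw [if_neg (fun h => hA h.2), if_neg (fun h => hA (hiff.1 h)), zero_mul]
  rw [Finset.sum_congr rfl (fun A _ => step2 A), Finset.sum_comm]
  -- Step 3 : inner sum over A
  have step3 : ∀ S ∈ F.powerset,
      (∑ A : P, (if E ∪ S ⊆ A.1 then (-1 : k) ^ S.card * ((mu ℤ (A : WithTop P) ⊤ : ℤ) : k) else 0))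
      = if IsChain (· ≤ ·) ((E ∪ S : Finset T) : Set T) then (-1 : k) ^ S.card * (-1) else 0 := by
    intro S _
    by_cases hcS : IsChain (· ≤ ·) ((E ∪ S : Finset T) : Set T)
    case neg =>
      rw [if_neg hcS]
      refine Finset.sum_eq_zero fun A _ => ?_
      rw [if_neg]
      intro h
      exact hcS (A.2.1.mono (Finset.coe_subset.2 h))
    rw [if_pos hcS]
    have hA₀ : (⊥ : T) ∈ E ∪ S := Finset.mem_union_left _ hbotE
    have hrw : ∀ A : P, (if E ∪ S ⊆ A.1 then (-1 : k) ^ S.card * ((mu ℤ (A : WithTop P) ⊤ : ℤ) : k) else 0)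
        = (-1 : k) ^ S.card * (if (⟨E ∪ S, hcS, hA₀⟩ : P) ≤ A then ((mu ℤ (A : WithTop P) ⊤ : ℤ) : k) else 0) := by
      intro A
      rw [mul_ite, mul_zero]
      exact if_congr (by rw [← Subtype.coe_le_coe, Finset.le_iff_subset]) rfl rfl
    rw [Finset.sum_congr rfl (fun A _ => hrw A), ← Finset.mul_sum, sumA_k]
  rw [Finset.sum_congr rfl step3]
  -- Step 4 : pull out the sign
  have step4 : ∀ S ∈ F.powerset,
      (if IsChain (· ≤ ·) ((E ∪ S : Finset T) : Set T) then (-1 : k) ^ S.card * (-1) else 0)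
      = -(if IsChain (· ≤ ·) ((E ∪ S : Finset T) : Set T) then (-1 : k) ^ S.card else 0) := by
    intro S _
    by_cases h : IsChain (· ≤ ·) ((E ∪ S : Finset T) : Set T)
    · rw [if_pos h, if_pos h]; ring
    · rw [if_neg h, if_neg h, neg_zero]
  rw [Finset.sum_congr rfl step4, Finset.sum_neg_distrib]
  -- Step 5 : final case split
  by_cases hψg : ψ = g
  case pos =>
    subst hψg
    rw [if_pos rfl]
    have hFempty : F = ∅ := by
      rw [hF, Finset.filter_eq_empty_iff]
      rintro b - ⟨t, h1, h2⟩
      exact h2 h1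
    rw [hFempty, Finset.powerset_empty, Finset.sum_singleton, Finset.union_empty]
    have hEchain : IsChain (· ≤ ·) (E : Set T) := by
      intro x hx y hy hne
      simp only [hE, Finset.coe_union, Finset.coe_image, Finset.coe_univ, Set.image_univ,
        Set.mem_union, Finset.coe_insert, Finset.coe_singleton, Set.mem_insert_iff,
        Set.mem_singleton_iff] at hx hy
      rcases hx with hx | hx | hx
      · rcases hy with hy | hy | hy
        · exact hchain (by obtain ⟨a, -, ha⟩ := Finset.mem_image.1 (Finset.mem_coe.1 hx); exact ⟨a, ha⟩)
            (by obtain ⟨a, -, ha⟩ := Finset.mem_image.1 (Finset.mem_coe.1 hy); exact ⟨a, ha⟩) hne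
        · subst hy; exact Or.inr bot_le
        · subst hy; exact Or.inl le_top
      · subst hx; exact Or.inl bot_le
      · subst hx; exact Or.inr le_top
    rw [if_pos hEchain]
    simp
  rw [if_neg hψg, neg_eq_zero]
  -- construct the cone point x₀
  by_cases hbad : ∃ t s, ψ s ≤ g t ∧ ¬ g s ≤ g t
  case pos =>
    obtain ⟨t, s, h1, h2⟩ := hbad
    have hx₀F : g t ∈ F := Finset.mem_filter.2 ⟨Finset.mem_univ _, s, h1, h2⟩
    have hx₀E : g t ∈ E := by
      rw [hE]
      exact Finset.mem_union_left _ (Finset.mem_image_of_mem g (Finset.mem_univ t))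
    refine invol_sum E F (g t) hx₀F ?_
    intro S hS hc
    rwa [Finset.union_insert,
      Finset.insert_eq_self.2 (Finset.mem_union_left S hx₀E)]
  case neg =>
    push_neg at hbad
    set D : Finset T := (Finset.univ.filter fun t => ψ t ≠ g t).image ψ with hD
    have hDne : D.Nonempty := by
      have : ∃ t, ψ t ≠ g t := by
        by_contra h
        push_neg at h
        exact hψg (funext h)
      obtain ⟨t, ht⟩ := this
      exact ⟨ψ t, Finset.mem_image_of_mem ψ (Finset.mem_filter.2 ⟨Finset.mem_univ _, ht⟩)⟩
    have hDchain : IsChain (· ≤ ·) (D : Set T) := by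
      refine hchain.mono ?_
      intro x hx
      rw [Finset.mem_coe, hD] at hx
      replace hx := Finset.mem_image.1 hx
      obtain ⟨t, -, rfl⟩ := hx
      exact ⟨t, rfl⟩
    set x₀ : T := D.inf id with hx₀
    have hx₀D : x₀ ∈ D := chain_inf_mem' hDchain hDne
    obtain ⟨t₀, ht₀mem, hx₀eq⟩ := Finset.mem_image.1 hx₀D
    have ht₀ne : ψ t₀ ≠ g t₀ := (Finset.mem_filter.1 ht₀mem).2
    have hlow : ∀ y ∈ F, x₀ ≤ y := by
      intro y hy
      obtain ⟨s, h1, h2⟩ := (Finset.mem_filter.1 hy).2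
      have hsne : ψ s ≠ g s := fun h => h2 (h ▸ h1)
      have hsD : ψ s ∈ D :=
        Finset.mem_image_of_mem ψ (Finset.mem_filter.2 ⟨Finset.mem_univ _, hsne⟩)
      exact le_trans (Finset.inf_le hsD) h1
    have hx₀F : x₀ ∈ F := by
      refine Finset.mem_filter.2 ⟨Finset.mem_univ _, t₀, le_of_eq hx₀eq, fun h => ?_⟩
      exact ht₀ne (le_antisymm (hf1 t₀) (by rw [hx₀eq]; exact h))
    have hcompE : ∀ y ∈ E, x₀ ≤ y ∨ y ≤ x₀ := by
      intro y hy
      rw [hE, Finset.mem_union] at hy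
      rcases hy with hy | hy
      · obtain ⟨s, -, rfl⟩ := Finset.mem_image.1 hy
        by_cases hs : ψ s = g s
        · rcases eq_or_ne x₀ (g s) with h | h
          · exact Or.inl h.le
          · exact hchain ⟨t₀, hx₀eq⟩ ⟨s, hs⟩ h
        · have hsD : ψ s ∈ D :=
            Finset.mem_image_of_mem ψ (Finset.mem_filter.2 ⟨Finset.mem_univ _, hs⟩)
          exact Or.inl (le_trans (Finset.inf_le hsD) (hf1 s))
      · rcases Finset.mem_insert.1 hy with rfl | hy
        · exact Or.inr bot_le
        · rw [Finset.mem_singleton.1 hy]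
          exact Or.inl le_top
    refine invol_sum E F x₀ hx₀F ?_
    intro S hS hc
    rw [Finset.union_insert, Finset.coe_insert]
    refine hc.insert ?_
    intro y hy hne'
    rw [Finset.mem_coe, Finset.mem_union] at hy
    rcases hy with hy | hy
    · exact hcompE y hy
    · exact Or.inl (hlow y (hS hy))

end main2

/-- For every join-endomorphism `ψ` of `T` with totally ordered image,
`e · ψ = ψ` in the monoid algebra (Theorem `main-theorem`, equation (2)). -/
theorem eTot_mul_join_endo_with_chain_image
    {T : Type*} [Lattice T] [Fintype T] [BoundedOrder T]
    {k : Type*} [CommRing k]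
    (ψ : T → T) (hψ : ∀ X : Finset T, ψ (X.sup id) = X.sup ψ)
    (hchain : IsChain (· ≤ ·) (Set.range ψ)) :
    eTot T k * MonoidAlgebra.of k (Function.End T) ψ
      = MonoidAlgebra.of k (Function.End T) ψ := by
  classical
  obtain ⟨ψ', rfl⟩ : ∃ ψ' : Function.End T, (ψ' : T → T) = ψ := ⟨ψ, rfl⟩
  rw [eTot, neg_mul, Finset.sum_mul]
  simp only [smul_mul_assoc]
  simp only [MonoidAlgebra.of_apply, MonoidAlgebra.single_mul_single, one_mul,
    MonoidAlgebra.smul_single', mul_one]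
  refine MonoidAlgebra.ext (Finsupp.ext fun g => ?_)
  rw [MonoidAlgebra.neg_apply, MonoidAlgebra.coeff_sum, Finset.sum_apply']
  simp_rw [MonoidAlgebra.coeff_single_apply]
  rw [key_calc ψ' hchain g]
  by_cases h : ψ' = g <;> simp [h]
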